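/- arXiv:2203.14292 — 2 statements merged into one kernel-verified Lean document; each statement's English description precedes it below -/
import Mathlib

section
/- Let I⁰ and the filtration ⟨I⁰_α : α < κ⟩ as above (I⁰_γ = {ν : ∀n, ν₁(n) < γ}). For every limit ordinal δ < κ and every ν ∈ I⁰ with ν ∉ I⁰_δ, there exists β < δ such that for all σ ∈ I⁰_δ with σ > ν there exists σ' ∈ I⁰_β with σ > σ' > ν. -/
def I0 (κ : Cardinal) : Set (ℕ → Ordinal × ℚ) :=
  {f | (∀ n, (f n).1 < κ.ord) ∧ {n | (f n).1 ≠ 0}.Finite}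

def I0lt (f g : ℕ → Ordinal × ℚ) : Prop :=
  ∃ n : ℕ, (∀ m, m < n → f m = g m) ∧
    ((f n).1 < (g n).1 ∨ ((f n).1 = (g n).1 ∧ (f n).2 < (g n).2))

def I0filt (κ : Cardinal) (γ : Ordinal) : Set (ℕ → Ordinal × ℚ) :=
  {f | f ∈ I0 κ ∧ ∀ n, (f n).1 < γ}

/-!
Since `ν` has only finitely many nonzero ordinal coordinates and `δ` is a limit, the coordinates
of `ν` lying below `δ` are all bounded by some `β < δ`. If `ν < σ` first differ at `n`, then all
of `ν`'s coordinates up to `n` lie below `δ`, hence below `β`, and the sequence that agrees with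
`ν` before `n`, has ordinal part `ν₁(n)` and a rational strictly between `ν₂(n)` and `σ₂(n)`
(or just above `ν₂(n)`) at `n`, and vanishes after `n`, lies in `I⁰_β` strictly between them.
-/

theorem Order.IsSuccLimit.exists_lt_forall_lt_of_finite {α : Type*} [LinearOrder α]
    [SuccOrder α] {δ : α} (hδ : Order.IsSuccLimit δ) {s : Set α} (hs : s.Finite)
    (hsδ : ∀ x ∈ s, x < δ) : ∃ β < δ, ∀ x ∈ s, x < β := by
  induction s, hs using Set.Finite.induction_on with
  | empty => simpa using not_isMin_iff.1 hδ.1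
  | @insert x s _ _ ih =>
    obtain ⟨β, hβδ, hβ⟩ := ih fun y hy => hsδ y (Set.mem_insert_of_mem x hy)
    have hxδ : x < δ := hsδ x (Set.mem_insert x s)
    refine ⟨max β (Order.succ x), max_lt hβδ (hδ.succ_lt hxδ), ?_⟩
    rintro y (rfl | hy)
    · exact lt_max_of_lt_right (Order.lt_succ_of_not_isMax (not_isMax_of_lt hxδ))
    · exact lt_max_of_lt_left (hβ y hy)

theorem finite_range_fst_of_mem_I0 {κ : Cardinal} {ν : ℕ → Ordinal × ℚ} (hν : ν ∈ I0 κ) :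
    (Set.range fun m => (ν m).1).Finite := by
  refine ((hν.2.image fun m => (ν m).1).insert 0).subset ?_
  rintro _ ⟨m, rfl⟩
  by_cases h : (ν m).1 = 0
  · exact Or.inl h
  · exact Or.inr ⟨m, h, rfl⟩

theorem exists_lt_forall_fst_lt_of_mem_I0 {κ : Cardinal} {ν : ℕ → Ordinal × ℚ} (hν : ν ∈ I0 κ)
    {δ : Ordinal} (hδ : Order.IsSuccLimit δ) :
    ∃ β < δ, ∀ m, (ν m).1 < δ → (ν m).1 < β := by
  obtain ⟨β, hβδ, hβ⟩ := hδ.exists_lt_forall_lt_of_finite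
    ((finite_range_fst_of_mem_I0 hν).inter_of_left (Set.Iio δ)) fun _ hx => hx.2
  exact ⟨β, hβδ, fun m hm => hβ _ ⟨⟨m, rfl⟩, hm⟩⟩

def I0truncate (ν : ℕ → Ordinal × ℚ) (n : ℕ) (q : ℚ) : ℕ → Ordinal × ℚ :=
  fun m => if m < n then ν m else if m = n then ((ν n).1, q) else (0, 0)

section I0truncate

variable {ν : ℕ → Ordinal × ℚ} {n : ℕ} {q : ℚ}

theorem I0truncate_of_lt {m : ℕ} (hm : m < n) : I0truncate ν n q m = ν m := if_pos hm

theorem I0truncate_self : I0truncate ν n q n = ((ν n).1, q) := by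
  simp [I0truncate]

theorem I0truncate_of_gt {m : ℕ} (hm : n < m) : I0truncate ν n q m = (0, 0) := by
  simp [I0truncate, Nat.lt_asymm hm, hm.ne']

theorem I0truncate_fst_eq_or_eq_zero (m : ℕ) :
    (I0truncate ν n q m).1 = (ν m).1 ∧ m ≤ n ∨ (I0truncate ν n q m).1 = 0 := by
  rcases lt_trichotomy m n with h | rfl | h
  · exact Or.inl ⟨by rw [I0truncate_of_lt h], h.le⟩
  · exact Or.inl ⟨by rw [I0truncate_self], le_rfl⟩
  · exact Or.inr (by rw [I0truncate_of_gt h])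

theorem I0truncate_mem_I0filt {κ : Cardinal} {β : Ordinal} (hν : ν ∈ I0 κ)
    (hβ : ∀ m ≤ n, (ν m).1 < β) : I0truncate ν n q ∈ I0filt κ β := by
  have hκ : (0 : Ordinal) < κ.ord := zero_le.trans_lt (hν.1 0)
  have hβpos : (0 : Ordinal) < β := zero_le.trans_lt (hβ n le_rfl)
  refine ⟨⟨fun m => ?_, hν.2.subset fun m hm => ?_⟩, fun m => ?_⟩
  · rcases I0truncate_fst_eq_or_eq_zero (q := q) m with ⟨h, -⟩ | h <;> rw [h]
    exacts [hν.1 m, hκ]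
  · rcases I0truncate_fst_eq_or_eq_zero (q := q) m with ⟨h, -⟩ | h
    · rwa [Set.mem_ofPred_eq, h] at hm
    · exact absurd h hm
  · rcases I0truncate_fst_eq_or_eq_zero (q := q) m with ⟨h, hm⟩ | h <;> rw [h]
    exacts [hβ m hm, hβpos]

theorem I0lt_I0truncate (hq : (ν n).2 < q) : I0lt ν (I0truncate ν n q) :=
  ⟨n, fun _ hm => (I0truncate_of_lt hm).symm, Or.inr ⟨by rw [I0truncate_self], by
    rwa [I0truncate_self]⟩⟩

theorem I0truncate_I0lt {σ : ℕ → Ordinal × ℚ} (hagree : ∀ m < n, ν m = σ m)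
    (hn : (ν n).1 < (σ n).1 ∨ (ν n).1 = (σ n).1 ∧ q < (σ n).2) :
    I0lt (I0truncate ν n q) σ :=
  ⟨n, fun m hm => (I0truncate_of_lt hm).trans (hagree m hm), by rwa [I0truncate_self]⟩

theorem exists_I0truncate_between {σ : ℕ → Ordinal × ℚ} (hagree : ∀ m < n, ν m = σ m)
    (hn : (ν n).1 < (σ n).1 ∨ (ν n).1 = (σ n).1 ∧ (ν n).2 < (σ n).2) :
    ∃ q, I0lt ν (I0truncate ν n q) ∧ I0lt (I0truncate ν n q) σ := by
  rcases hn with h | ⟨h, h2⟩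
  · exact ⟨(ν n).2 + 1, I0lt_I0truncate (lt_add_one _), I0truncate_I0lt hagree (Or.inl h)⟩
  · obtain ⟨q, hq1, hq2⟩ := exists_between h2
    exact ⟨q, I0lt_I0truncate hq1, I0truncate_I0lt hagree (Or.inr ⟨h, hq2⟩)⟩

end I0truncate

theorem I0_density_lemma_general (κ : Cardinal) :
    ∀ δ : Ordinal, δ < κ.ord → Order.IsSuccLimit δ →
      ∀ ν ∈ I0 κ, ν ∉ I0filt κ δ →
        ∃ β < δ, ∀ σ ∈ I0filt κ δ, I0lt ν σ →
          ∃ σ' ∈ I0filt κ β, I0lt σ' σ ∧ I0lt ν σ' := by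
  intro δ _ hδ ν hν _
  obtain ⟨β, hβδ, hβ⟩ := exists_lt_forall_fst_lt_of_mem_I0 hν hδ
  refine ⟨β, hβδ, fun σ hσ ⟨n, hagree, hn⟩ => ?_⟩
  have hνδ : ∀ m ≤ n, (ν m).1 < δ := by
    intro m hm
    rcases hm.lt_or_eq with hm | rfl
    · exact hagree m hm ▸ hσ.2 m
    · exact (hn.elim le_of_lt fun h => h.1.le).trans_lt (hσ.2 m)
  obtain ⟨q, hνq, hqσ⟩ := exists_I0truncate_between hagree hn
  exact ⟨_, I0truncate_mem_I0filt hν fun m hm => hβ m (hνδ m hm), hqσ, hνq⟩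

/-- for every limit `δ < κ` and every `ν ∈ I⁰` with `ν ∉ I⁰_δ`,
there is `β < δ` such that every `σ ∈ I⁰_δ` with `σ > ν` admits `σ' ∈ I⁰_β`
with `σ > σ' > ν`. -/
theorem I0_density_lemma (κ : Cardinal) (hreg : κ.IsRegular)
    (hunc : Cardinal.aleph0 < κ) :
    ∀ δ : Ordinal, δ < κ.ord → Order.IsSuccLimit δ →
      ∀ ν ∈ I0 κ, ν ∉ I0filt κ δ →
        ∃ β < δ, ∀ σ ∈ I0filt κ δ, I0lt ν σ →
          ∃ σ' ∈ I0filt κ β, I0lt σ' σ ∧ I0lt ν σ' :=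
  I0_density_lemma_general κ
end

section
/- Fix a limit ordinal δ and ν, σ ∈ I⁰ with σ ∈ I⁰_δ, σ > ν, and suppose n is the least index where σ and ν differ and σ₁(n) = ν₁(n) (equal κ-coordinates but σ₂(n) > ν₂(n)). Let β < δ bound all values ν₁(m) that are < δ. Then the function σ' defined by σ'(m) = ν(m) for m < n, σ'(n) = (ν₁(n), r) for any rational r with ν₂(n) < r < σ₂(n), and σ'(m) = (0,0) for m > n, lies in I⁰_β and satisfies σ > σ' > ν. -/
theorem I0lt_of_eq_of_fst_eq_of_snd_lt {f g : ℕ → Ordinal × ℚ} {n : ℕ}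
    (hagree : ∀ m, m < n → f m = g m) (hfst : (f n).1 = (g n).1) (hsnd : (f n).2 < (g n).2) :
    I0lt f g :=
  ⟨n, hagree, Or.inr ⟨hfst, hsnd⟩⟩

theorem mem_I0filt_of_fst_lt {κ : Cardinal} {γ : Ordinal} {f : ℕ → Ordinal × ℚ}
    (hγ : γ ≤ κ.ord) (hlt : ∀ m, (f m).1 < γ) (hfin : {m | (f m).1 ≠ 0}.Finite) :
    f ∈ I0filt κ γ :=
  ⟨⟨fun m => (hlt m).trans_le hγ, hfin⟩, hlt⟩

theorem Nat.finite_setOf_ne_zero_of_eq_zero_of_lt {α : Type*} [Zero α] {f : ℕ → α} {n : ℕ}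
    (h : ∀ m, n < m → f m = 0) : {m | f m ≠ 0}.Finite :=
  (Set.finite_Iic n).subset fun m hm => not_lt.1 fun hnm => hm (h m hnm)

theorem I0_interpolant_general (κ : Cardinal)
    (δ : Ordinal) (hδκ : δ < κ.ord)
    (ν σ : ℕ → Ordinal × ℚ) (hσ : σ ∈ I0filt κ δ)
    (n : ℕ) (hagree : ∀ m, m < n → σ m = ν m)
    (heq1 : (σ n).1 = (ν n).1)
    (β : Ordinal) (hβδ : β < δ)
    (hβ : ∀ m : ℕ, (ν m).1 < δ → (ν m).1 < β)
    (r : ℚ) (hr1 : (ν n).2 < r) (hr2 : r < (σ n).2)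
    (σ' : ℕ → Ordinal × ℚ)
    (hσ' : ∀ m : ℕ, σ' m =
      if m < n then ν m else if m = n then ((ν n).1, r) else ((0 : Ordinal), (0 : ℚ))) :
    σ' ∈ I0filt κ β ∧ I0lt σ' σ ∧ I0lt ν σ' := by
  have below : ∀ m, m < n → σ' m = ν m := fun m hm => by rw [hσ', if_pos hm]
  have at_n : σ' n = ((ν n).1, r) := by simp [hσ']
  have above : ∀ m, n < m → σ' m = (0, 0) := fun m hm => by
    rw [hσ', if_neg (by omega), if_neg (by omega)]
  have hνn : (ν n).1 < β := hβ n (heq1 ▸ hσ.2 n)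
  have hbound : ∀ m, (σ' m).1 < β := by
    intro m
    rcases lt_trichotomy m n with h | rfl | h
    · rw [below m h]; exact hβ m (hagree m h ▸ hσ.2 m)
    · rw [at_n]; exact hνn
    · rw [above m h]; exact zero_le.trans_lt hνn
  refine ⟨mem_I0filt_of_fst_lt (hβδ.trans hδκ).le hbound
      (Nat.finite_setOf_ne_zero_of_eq_zero_of_lt fun m hm => by rw [above m hm]), ?_, ?_⟩
  · exact I0lt_of_eq_of_fst_eq_of_snd_lt (fun m hm => (below m hm).trans (hagree m hm).symm)
      (by rw [at_n, heq1]) (by rw [at_n]; exact hr2)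
  · exact I0lt_of_eq_of_fst_eq_of_snd_lt (fun m hm => (below m hm).symm)
      (by rw [at_n]) (by rw [at_n]; exact hr1)

/-- the explicit interpolant in Case 1 of Lemma `first_order_result`.
If `σ ∈ I⁰_δ`, `σ > ν` with least difference at `n`, equal first coordinates at `n`,
`β < δ` bounds all values `ν₁(m)` that are `< δ`, and `ν₂(n) < r < σ₂(n)`,
then `σ'` (copying `ν` below `n`, taking `(ν₁(n), r)` at `n` and `(0,0)` above)
lies in `I⁰_β` and `σ > σ' > ν`. -/
theorem I0_interpolant (κ : Cardinal) (hreg : κ.IsRegular)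
    (hunc : Cardinal.aleph0 < κ)
    (δ : Ordinal) (hδκ : δ < κ.ord) (hδ : Order.IsSuccLimit δ)
    (ν σ : ℕ → Ordinal × ℚ) (hν : ν ∈ I0 κ) (hσ : σ ∈ I0filt κ δ)
    (hνσ : I0lt ν σ)
    (n : ℕ) (hagree : ∀ m, m < n → σ m = ν m) (hdiff : σ n ≠ ν n)
    (heq1 : (σ n).1 = (ν n).1) (hlt2 : (ν n).2 < (σ n).2)
    (β : Ordinal) (hβδ : β < δ)
    (hβ : ∀ m : ℕ, (ν m).1 < δ → (ν m).1 < β)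
    (r : ℚ) (hr1 : (ν n).2 < r) (hr2 : r < (σ n).2)
    (σ' : ℕ → Ordinal × ℚ)
    (hσ' : ∀ m : ℕ, σ' m =
      if m < n then ν m else if m = n then ((ν n).1, r) else ((0 : Ordinal), (0 : ℚ))) :
    σ' ∈ I0filt κ β ∧ I0lt σ' σ ∧ I0lt ν σ' :=
  I0_interpolant_general κ δ hδκ ν σ hσ n hagree heq1 β hβδ hβ r hr1 hr2 σ' hσ'
end
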